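/- arXiv:0806.1179 — 3 statements merged into one kernel-verified Lean document; each statement's English description precedes it below -/
import Mathlib

section
/- The convolution product on the space of finitely supported Q-valued functions on isomorphism classes of labeled rooted forests, defined by (f × g)(F) = Σ_{G ⊆ F} f(G)·g(F/G) where the sum runs over all subforests G of F obtained from admissible cuts and F/G denotes the root component of the cut, is associative. -/
attribute [local instance] Classical.propDecidable

noncomputable section

/-- A labeled rooted forest: a finite set of vertex labels together with a
parent function (`none` = root), acyclic via a depth function. -/
structure Forest where
  verts : Finset ℕ
  parent : ℕ → Option ℕ
  parent_mem : ∀ v ∈ verts, ∀ p, parent v = some p → p ∈ verts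
  wf : ∃ d : ℕ → ℕ, ∀ v ∈ verts, ∀ p, parent v = some p → d p < d v

namespace Forest

/-- `S` is the vertex set of a subforest of `F` (the branches `P_C(F)` severed by an
admissible cut `C`): a subset of the vertices closed under passing to children. -/
def IsSub (F : Forest) (S : Finset ℕ) : Prop :=
  S ⊆ F.verts ∧ ∀ v ∈ S, ∀ w ∈ F.verts, F.parent w = some v → w ∈ S

/-- The subforest `P_C(F)` determined by the (descendant-closed) vertex set `S`. -/
def restrict (F : Forest) (S : Finset ℕ) : Forest where
  verts := S ∩ F.verts
  parent v := (F.parent v).bind fun p =>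
    if v ∈ S ∩ F.verts ∧ p ∈ S ∩ F.verts then some p else none
  parent_mem := by
    intro v hv p hp
    beta_reduce at hp
    cases h : F.parent v with
    | none => rw [h] at hp; simp at hp
    | some q =>
      rw [h] at hp
      simp only [Option.bind_some] at hp
      split at hp
      · rename_i hc; cases hp; exact hc.2
      · simp at hp
  wf := by
    obtain ⟨d, hd⟩ := F.wf
    refine ⟨d, ?_⟩
    intro v hv p hp
    beta_reduce at hp
    cases h : F.parent v with
    | none => rw [h] at hp; simp at hp
    | some q =>
      rw [h] at hp
      simp only [Option.bind_some] at hp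
      split at hp
      · rename_i hc; cases hp
        exact hd v (Finset.mem_inter.mp hv).2 _ h
      · simp at hp

/-- The root part `R_C(F) = F/P_C(F)` determined by the severed vertex set `S`. -/
def quot (F : Forest) (S : Finset ℕ) : Forest where
  verts := F.verts \ S
  parent v := (F.parent v).bind fun p =>
    if v ∈ F.verts \ S ∧ p ∈ F.verts \ S then some p else none
  parent_mem := by
    intro v hv p hp
    beta_reduce at hp
    cases h : F.parent v with
    | none => rw [h] at hp; simp at hp
    | some q =>
      rw [h] at hp
      simp only [Option.bind_some] at hp
      split at hp
      · rename_i hc; cases hp; exact hc.2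
      · simp at hp
  wf := by
    obtain ⟨d, hd⟩ := F.wf
    refine ⟨d, ?_⟩
    intro v hv p hp
    beta_reduce at hp
    cases h : F.parent v with
    | none => rw [h] at hp; simp at hp
    | some q =>
      rw [h] at hp
      simp only [Option.bind_some] at hp
      split at hp
      · rename_i hc; cases hp
        exact hd v (Finset.mem_sdiff.mp hv).1 _ h
      · simp at hp

/-- `φ` realizes an isomorphism of labeled rooted forests (a root- and
incidence-preserving bijection on labels). -/
def IsoMap (F G : Forest) (φ : ℕ → ℕ) : Prop :=
  Set.BijOn φ (F.verts : Set ℕ) (G.verts : Set ℕ) ∧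
    ∀ v ∈ F.verts, (F.parent v).map φ = G.parent (φ v)

/-- Isomorphism of labeled rooted forests. -/
def Iso (F G : Forest) : Prop := ∃ φ, IsoMap F G φ

/-- A function on forests which only depends on the isomorphism class. -/
def Invariant (f : Forest → ℚ) : Prop := ∀ F G, Iso F G → f F = f G

/-- A function on forests supported on finitely many isomorphism classes. -/
def FinSupp (f : Forest → ℚ) : Prop :=
  ∃ s : Finset Forest, ∀ F, f F ≠ 0 → ∃ G ∈ s, Iso F G

/-- The Ringel-Hall convolution product:
`(f × g)(F) = ∑_{G ⊆ F} f(G) · g(F/G)`, the sum running over subforests of `F`. -/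
def conv (f g : Forest → ℚ) : Forest → ℚ := fun F =>
  ∑ S ∈ F.verts.powerset, if F.IsSub S then f (F.restrict S) * g (F.quot S) else 0

end Forest

end

/-!
Both triple products expand to the sum, over pairs `S ⊆ T` of subforests of `F`, of
`f (F|S) * g ((F/S)|(T \ S)) * h (F/T)`. On the left, the subforests of `F|T` are the subforests
of `F` contained in `T`; on the right, `T ↦ T \ S` matches the subforests `T ⊇ S` of `F` with the
subforests of `F/S`, and `(F/S)/(T \ S) = F/T`. Since restriction and quotient keep the labels,
these identifications are equalities of labeled forests, so the two sums agree after swapping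
the order of summation.
-/

namespace Forest

@[ext]
lemma ext {A B : Forest} (hverts : A.verts = B.verts) (hparent : A.parent = B.parent) :
    A = B := by
  cases A; cases B; subst hverts hparent; rfl

@[simp]
lemma restrict_verts (F : Forest) (S : Finset ℕ) : (F.restrict S).verts = S ∩ F.verts := rfl

@[simp]
lemma quot_verts (F : Forest) (S : Finset ℕ) : (F.quot S).verts = F.verts \ S := rfl

lemma restrict_parent_eq_some_iff (F : Forest) (S : Finset ℕ) (w v : ℕ) :
    (F.restrict S).parent w = some v ↔
      F.parent w = some v ∧ w ∈ S ∩ F.verts ∧ v ∈ S ∩ F.verts := by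
  change (F.parent w).bind _ = _ ↔ _
  cases F.parent w with
  | none => simp
  | some p => simp only [Option.bind_some]; split_ifs <;> grind

lemma quot_parent_eq_some_iff (F : Forest) (S : Finset ℕ) (w v : ℕ) :
    (F.quot S).parent w = some v ↔
      F.parent w = some v ∧ w ∈ F.verts \ S ∧ v ∈ F.verts \ S := by
  change (F.parent w).bind _ = _ ↔ _
  cases F.parent w with
  | none => simp
  | some p => simp only [Option.bind_some]; split_ifs <;> grind

lemma restrict_restrict (F : Forest) {S T : Finset ℕ} (hST : S ⊆ T) :
    (F.restrict T).restrict S = F.restrict S := by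
  ext1
  · ext x; simp only [restrict_verts, Finset.mem_inter]; grind
  · ext w v; simp only [restrict_parent_eq_some_iff, restrict_verts, Finset.mem_inter]; grind

lemma restrict_quot (F : Forest) (S T : Finset ℕ) :
    (F.restrict T).quot S = (F.quot S).restrict (T \ S) := by
  ext1
  · ext x; simp only [restrict_verts, quot_verts, Finset.mem_inter, Finset.mem_sdiff]; grind
  · ext w v
    simp only [restrict_parent_eq_some_iff, quot_parent_eq_some_iff, Finset.mem_inter,
      Finset.mem_sdiff, restrict_verts, quot_verts]
    grind

lemma quot_quot (F : Forest) {S T : Finset ℕ} (hST : S ⊆ T) :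
    (F.quot S).quot (T \ S) = F.quot T := by
  ext1
  · ext x; simp only [quot_verts, Finset.mem_sdiff]; grind
  · ext w v; simp only [quot_parent_eq_some_iff, quot_verts, Finset.mem_sdiff]; grind

lemma isSub_restrict_iff (F : Forest) {S T : Finset ℕ} (hT : F.IsSub T) :
    (F.restrict T).IsSub S ↔ S ⊆ T ∧ F.IsSub S := by
  obtain ⟨hTV, hTc⟩ := hT
  simp only [IsSub, restrict_verts, Finset.subset_inter_iff, restrict_parent_eq_some_iff,
    Finset.mem_inter]
  grind

lemma isSub_quot_sdiff_iff (F : Forest) {S T : Finset ℕ} (hS : F.IsSub S) (hST : S ⊆ T) :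
    (F.quot S).IsSub (T \ S) ↔ F.IsSub T := by
  obtain ⟨hSV, hSc⟩ := hS
  simp only [IsSub, quot_verts, quot_parent_eq_some_iff, Finset.mem_sdiff, Finset.subset_iff]
  grind

noncomputable def subforests (F : Forest) : Finset (Finset ℕ) := F.verts.powerset.filter F.IsSub

@[simp]
lemma mem_subforests {F : Forest} {S : Finset ℕ} : S ∈ F.subforests ↔ F.IsSub S := by
  simp only [subforests, Finset.mem_filter, Finset.mem_powerset, and_iff_right_iff_imp]
  exact fun h => h.1

lemma conv_apply (f g : Forest → ℚ) (F : Forest) :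
    conv f g F = ∑ S ∈ F.subforests, f (F.restrict S) * g (F.quot S) :=
  (Finset.sum_filter _ _).symm

lemma subforests_restrict (F : Forest) {T : Finset ℕ} (hT : F.IsSub T) :
    (F.restrict T).subforests = F.subforests.filter (· ⊆ T) := by
  ext S
  simp only [mem_subforests, Finset.mem_filter, isSub_restrict_iff F hT, and_comm]

lemma sum_subforests_quot {M : Type*} [AddCommMonoid M] (F : Forest) {S : Finset ℕ}
    (hS : F.IsSub S) (φ : Finset ℕ → M) :
    ∑ U ∈ (F.quot S).subforests, φ U = ∑ T ∈ F.subforests.filter (S ⊆ ·), φ (T \ S) := by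
  refine (Finset.sum_nbij' (· \ S) (· ∪ S) ?_ ?_ ?_ ?_ fun _ _ => rfl).symm
  · intro T hT
    simp only [Finset.mem_filter, mem_subforests] at hT
    simpa [isSub_quot_sdiff_iff F hS hT.2] using hT.1
  · intro U hU
    simp only [mem_subforests] at hU
    have hdisj : Disjoint U S := Finset.disjoint_of_subset_left hU.1 Finset.sdiff_disjoint
    simp only [Finset.mem_filter, mem_subforests, Finset.subset_union_right, and_true]
    rw [← isSub_quot_sdiff_iff F hS Finset.subset_union_right,
      Finset.union_sdiff_cancel_right hdisj]
    exact hU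
  · intro T hT
    exact Finset.sdiff_union_of_subset (Finset.mem_filter.mp hT).2
  · intro U hU
    exact Finset.union_sdiff_cancel_right
      (Finset.disjoint_of_subset_left (mem_subforests.mp hU).1 Finset.sdiff_disjoint)

lemma conv_conv_apply_left (f g h : Forest → ℚ) (F : Forest) :
    conv (conv f g) h F = ∑ T ∈ F.subforests, ∑ S ∈ F.subforests.filter (· ⊆ T),
      f (F.restrict S) * g ((F.quot S).restrict (T \ S)) * h (F.quot T) := by
  rw [conv_apply]
  refine Finset.sum_congr rfl fun T hT => ?_
  rw [conv_apply, subforests_restrict F (mem_subforests.mp hT), Finset.sum_mul]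
  refine Finset.sum_congr rfl fun S hS => ?_
  rw [restrict_restrict F (Finset.mem_filter.mp hS).2, restrict_quot]

lemma conv_conv_apply_right (f g h : Forest → ℚ) (F : Forest) :
    conv f (conv g h) F = ∑ S ∈ F.subforests, ∑ T ∈ F.subforests.filter (S ⊆ ·),
      f (F.restrict S) * g ((F.quot S).restrict (T \ S)) * h (F.quot T) := by
  rw [conv_apply]
  refine Finset.sum_congr rfl fun S hS => ?_
  rw [conv_apply, sum_subforests_quot F (mem_subforests.mp hS), Finset.mul_sum]
  refine Finset.sum_congr rfl fun T hT => ?_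
  rw [quot_quot F (Finset.mem_filter.mp hT).2, mul_assoc]

end Forest

theorem hall_conv_assoc_general (f g h : Forest → ℚ) :
    Forest.conv (Forest.conv f g) h = Forest.conv f (Forest.conv g h) := by
  funext F
  rw [Forest.conv_conv_apply_left, Forest.conv_conv_apply_right]
  exact Finset.sum_comm' fun T S => by simp only [Finset.mem_filter]; tauto

/-- The convolution product on the space of finitely supported
`ℚ`-valued isomorphism-invariant functions on labeled rooted forests,
`(f × g)(F) = ∑_{G ⊆ F} f(G)·g(F/G)`, is associative. -/
theorem hall_conv_assoc (f g h : Forest → ℚ)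
    (hf : Forest.Invariant f) (hf' : Forest.FinSupp f)
    (hg : Forest.Invariant g) (hg' : Forest.FinSupp g)
    (hh : Forest.Invariant h) (hh' : Forest.FinSupp h) :
    Forest.conv (Forest.conv f g) h = Forest.conv f (Forest.conv g h) :=
  hall_conv_assoc_general f g h
end

section
/- For a labeled rooted forest F with admissible cut C, there is a bijection between admissible cuts C' of F satisfying C ≤ C' (i.e., every edge of C' lies weakly closer to the root than the edges of C along any leaf-to-root path) and admissible cuts of the quotient forest R_C(F); consequently subforests of R_C(F) correspond bijectively to subforests H of F with P_C(F) ⊆ H ⊆ F. -/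
attribute [local instance] Classical.propDecidable

namespace Forest

/-- `Reaches F u v`: `v` lies (weakly) on the path from `u` to the root. -/
def Reaches (F : Forest) (u v : ℕ) : Prop :=
  Relation.ReflTransGen (fun a b => F.parent a = some b) u v

/-- An admissible cut, encoded by the set of lower endpoints of the cut edges:
a set of non-root vertices, no two of which lie on a common leaf-to-root path. -/
def AdmissibleCut (F : Forest) (C : Finset ℕ) : Prop :=
  (∀ v ∈ C, v ∈ F.verts ∧ F.parent v ≠ none) ∧
    ∀ v ∈ C, ∀ w ∈ C, F.Reaches v w → v = w

/-- The vertex set of the severed part `P_C(F)`: all vertices lying weakly below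
some cut edge. -/
noncomputable def cutSet (F : Forest) (C : Finset ℕ) : Finset ℕ :=
  F.verts.filter fun u => ∃ v ∈ C, F.Reaches u v

/-- `C ≤ C'`: along every leaf-to-root path, the cut edge of `C'` occurs at the
cut edge of `C` or closer to the root. -/
def CutLE (F : Forest) (C C' : Finset ℕ) : Prop :=
  ∀ v ∈ C, ∃ w ∈ C', F.Reaches v w

end Forest

/-!
A cut `C' ≥ C` cannot cut strictly inside `P_C(F)`: an edge of `C'` below an edge `c` of `C` would
share a leaf-to-root path with the edge of `C'` above `c`. So `C'` consists of edges of `C` together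
with the admissible cut `C' \ P_C(F)` of `R_C(F)`, and the edges of `C` it keeps are exactly those
not lying below that cut. Subforests `H ⊇ P_C(F)` correspond likewise to `H \ P_C(F)`.
-/

namespace Forest

variable {F : Forest} {S C C' D T : Finset ℕ} {u v w : ℕ}

lemma Reaches.mem_verts (h : F.Reaches u v) (hu : u ∈ F.verts) : v ∈ F.verts := by
  induction h with
  | refl => exact hu
  | tail _ hstep ih => exact F.parent_mem _ ih _ hstep

lemma Reaches.depth_le {d : ℕ → ℕ} (hd : ∀ v ∈ F.verts, ∀ p, F.parent v = some p → d p < d v)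
    (h : F.Reaches u v) (hu : u ∈ F.verts) : d v ≤ d u := by
  induction h with
  | refl => exact le_rfl
  | tail hr hstep ih => exact (hd _ (Reaches.mem_verts hr hu) _ hstep).le.trans ih

lemma Reaches.antisymm (h₁ : F.Reaches u v) (h₂ : F.Reaches v u) (hu : u ∈ F.verts) :
    u = v := by
  obtain ⟨d, hd⟩ := F.wf
  rcases Relation.ReflTransGen.cases_head h₁ with rfl | ⟨p, hp, hpv⟩
  · rfl
  · have := hd u hu p hp
    have := Reaches.depth_le hd hpv (F.parent_mem u hu p hp)
    have := Reaches.depth_le hd h₂ (h₁.mem_verts hu)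
    omega

lemma AdmissibleCut.mono (hD : F.AdmissibleCut D) (h : C ⊆ D) : F.AdmissibleCut C :=
  ⟨fun v hv => hD.1 v (h hv), fun v hv w hw => hD.2 v (h hv) w (h hw)⟩

lemma mem_cutSet : u ∈ F.cutSet C ↔ u ∈ F.verts ∧ ∃ v ∈ C, F.Reaches u v :=
  Finset.mem_filter

lemma isSub_cutSet : F.IsSub (F.cutSet C) :=
  ⟨Finset.filter_subset _ _, fun _ hv _ hw hwv =>
    have ⟨_, c, hc, hvc⟩ := mem_cutSet.1 hv
    mem_cutSet.2 ⟨hw, c, hc, Relation.ReflTransGen.head hwv hvc⟩⟩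

lemma AdmissibleCut.subset_cutSet (hC : F.AdmissibleCut C) : C ⊆ F.cutSet C := fun c hc =>
  mem_cutSet.2 ⟨(hC.1 c hc).1, c, hc, Relation.ReflTransGen.refl⟩

lemma mem_of_mem_cutSet_of_cutLE (hC' : F.AdmissibleCut C') (hle : F.CutLE C C')
    (hw : w ∈ C') (hwC : w ∈ F.cutSet C) : w ∈ C := by
  obtain ⟨hwV, c, hc, hwc⟩ := mem_cutSet.1 hwC
  obtain ⟨w', hw', hcw'⟩ := hle c hc
  obtain rfl : w = w' := hC'.2 w hw w' hw' (hwc.trans hcw')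
  rwa [hwc.antisymm hcw' hwV]

lemma parent_eq_of_quot_parent_eq (h : (F.quot S).parent u = some v) : F.parent u = some v := by
  change (F.parent u).bind _ = some v at h
  cases hu : F.parent u with
  | none => simp [hu] at h
  | some p =>
    simp only [hu, Option.bind_some] at h
    split_ifs at h
    exact h

lemma IsSub.quot_parent (hS : F.IsSub S) (hu : u ∈ F.verts) (huS : u ∉ S) :
    (F.quot S).parent u = F.parent u := by
  change (F.parent u).bind _ = _
  cases hp : F.parent u with
  | none => rfl
  | some p =>
    have hpS : p ∉ S := fun hpS => huS (hS.2 p hpS u hu hp)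
    simp [hu, huS, F.parent_mem u hu p hp, hpS]

lemma IsSub.quot_reaches_iff (hS : F.IsSub S) (hu : u ∈ F.verts) (huS : u ∉ S) :
    (F.quot S).Reaches u v ↔ F.Reaches u v := by
  refine ⟨fun h => Relation.ReflTransGen.mono (fun _ _ => parent_eq_of_quot_parent_eq) _ _ h,
    fun h => ?_⟩
  induction h using Relation.ReflTransGen.head_induction_on with
  | refl => exact Relation.ReflTransGen.refl
  | @head a p hstep _ ih =>
    have hq : (F.quot S).parent a = some p := (hS.quot_parent hu huS).trans hstep
    have hp := Finset.mem_sdiff.1 ((F.quot S).parent_mem a (Finset.mem_sdiff.2 ⟨hu, huS⟩) p hq)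
    exact Relation.ReflTransGen.head hq (ih hp.1 hp.2)

lemma IsSub.admissibleCut_quot_iff (hS : F.IsSub S) :
    (F.quot S).AdmissibleCut D ↔ F.AdmissibleCut D ∧ Disjoint D S := by
  constructor
  · rintro ⟨hmem, hanti⟩
    have hD : ∀ v ∈ D, v ∈ F.verts ∧ v ∉ S := fun v hv => Finset.mem_sdiff.1 (hmem v hv).1
    refine ⟨⟨fun v hv => ⟨(hD v hv).1, ?_⟩, fun v hv w hw hvw => hanti v hv w hw
      ((hS.quot_reaches_iff (hD v hv).1 (hD v hv).2).2 hvw)⟩,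
      Finset.disjoint_left.2 fun v hv => (hD v hv).2⟩
    rw [← hS.quot_parent (hD v hv).1 (hD v hv).2]
    exact (hmem v hv).2
  · rintro ⟨⟨hmem, hanti⟩, hdisj⟩
    have hDS : ∀ v ∈ D, v ∉ S := fun v hv => Finset.disjoint_left.1 hdisj hv
    refine ⟨fun v hv => ⟨Finset.mem_sdiff.2 ⟨(hmem v hv).1, hDS v hv⟩, ?_⟩,
      fun v hv w hw hvw => hanti v hv w hw ((hS.quot_reaches_iff (hmem v hv).1 (hDS v hv)).1 hvw)⟩
    rw [hS.quot_parent (hmem v hv).1 (hDS v hv)]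
    exact (hmem v hv).2

lemma IsSub.isSub_quot_iff (hS : F.IsSub S) :
    (F.quot S).IsSub T ↔ F.IsSub (T ∪ S) ∧ Disjoint T S := by
  constructor
  · rintro ⟨hsub, hclosed⟩
    refine ⟨⟨Finset.union_subset (fun v hv => (Finset.mem_sdiff.1 (hsub hv)).1) hS.1, ?_⟩,
      Finset.disjoint_left.2 fun v hv => (Finset.mem_sdiff.1 (hsub hv)).2⟩
    intro v hv w hw hwv
    by_cases hwS : w ∈ S
    · exact Finset.mem_union_right _ hwS
    rcases Finset.mem_union.1 hv with hvT | hvS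
    · exact Finset.mem_union_left _ (hclosed v hvT w (Finset.mem_sdiff.2 ⟨hw, hwS⟩)
        ((hS.quot_parent hw hwS).trans hwv))
    · exact absurd (hS.2 v hvS w hw hwv) hwS
  · rintro ⟨⟨hsub, hclosed⟩, hdisj⟩
    refine ⟨fun v hv => Finset.mem_sdiff.2 ⟨hsub (Finset.mem_union_left _ hv),
      Finset.disjoint_left.1 hdisj hv⟩, fun v hv w hw hwv => ?_⟩
    have hw' := Finset.mem_sdiff.1 hw
    exact (Finset.mem_union.1 (hclosed v (Finset.mem_union_left _ hv) w hw'.1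
      (parent_eq_of_quot_parent_eq hwv))).resolve_right hw'.2

noncomputable def extendCut (F : Forest) (C D : Finset ℕ) : Finset ℕ :=
  D ∪ C.filter fun c => ¬ ∃ w ∈ D, F.Reaches c w

lemma admissibleCut_extendCut (hC : F.AdmissibleCut C) (hD : F.AdmissibleCut D)
    (hDC : Disjoint D (F.cutSet C)) : F.AdmissibleCut (F.extendCut C D) := by
  refine ⟨fun v hv => ?_, fun v hv w hw hvw => ?_⟩
  · rcases Finset.mem_union.1 hv with hvD | hvC
    · exact hD.1 v hvD
    · exact hC.1 v (Finset.mem_filter.1 hvC).1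
  rcases Finset.mem_union.1 hv with hvD | hvC <;> rcases Finset.mem_union.1 hw with hwD | hwC
  · exact hD.2 v hvD w hwD hvw
  · have hvP := mem_cutSet.2 ⟨(hD.1 v hvD).1, w, (Finset.mem_filter.1 hwC).1, hvw⟩
    exact absurd hvP (Finset.disjoint_left.1 hDC hvD)
  · exact absurd ⟨w, hwD, hvw⟩ (Finset.mem_filter.1 hvC).2
  · exact hC.2 v (Finset.mem_filter.1 hvC).1 w (Finset.mem_filter.1 hwC).1 hvw

lemma cutLE_extendCut : F.CutLE C (F.extendCut C D) := by
  intro c hc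
  by_cases h : ∃ w ∈ D, F.Reaches c w
  · obtain ⟨w, hw, hcw⟩ := h
    exact ⟨w, Finset.mem_union_left _ hw, hcw⟩
  · exact ⟨c, Finset.mem_union_right _ (Finset.mem_filter.2 ⟨hc, h⟩),
      Relation.ReflTransGen.refl⟩

lemma extendCut_sdiff_cutSet (hC : F.AdmissibleCut C) (hDC : Disjoint D (F.cutSet C)) :
    F.extendCut C D \ F.cutSet C = D := by
  rw [extendCut, Finset.union_sdiff_distrib, Finset.sdiff_eq_self_of_disjoint hDC,
    Finset.sdiff_eq_empty_iff_subset.2 ((Finset.filter_subset _ C).trans hC.subset_cutSet),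
    Finset.union_empty]

lemma extendCut_of_cutLE (hC : F.AdmissibleCut C) (hC' : F.AdmissibleCut C')
    (hle : F.CutLE C C') : F.extendCut C (C' \ F.cutSet C) = C' := by
  ext x
  simp only [extendCut, Finset.mem_union, Finset.mem_sdiff, Finset.mem_filter]
  constructor
  · rintro (⟨hx, -⟩ | ⟨hxC, hxD⟩)
    · exact hx
    obtain ⟨w, hw, hxw⟩ := hle x hxC
    have hwP : w ∈ F.cutSet C := by_contra fun hwP => hxD ⟨w, ⟨hw, hwP⟩, hxw⟩
    rwa [hC.2 x hxC w (mem_of_mem_cutSet_of_cutLE hC' hle hw hwP) hxw]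
  · intro hx
    by_cases hxP : x ∈ F.cutSet C
    · refine Or.inr ⟨mem_of_mem_cutSet_of_cutLE hC' hle hx hxP, ?_⟩
      rintro ⟨w, ⟨hw, hwP⟩, hxw⟩
      exact hwP (hC'.2 x hx w hw hxw ▸ hxP)
    · exact Or.inl ⟨hx, hxP⟩

noncomputable def cutsAboveEquiv (hC : F.AdmissibleCut C) :
    {C' : Finset ℕ // F.AdmissibleCut C' ∧ F.CutLE C C'} ≃
      {D : Finset ℕ // (F.quot (F.cutSet C)).AdmissibleCut D} where
  toFun C' := ⟨C'.1 \ F.cutSet C, isSub_cutSet.admissibleCut_quot_iff.2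
    ⟨C'.2.1.mono Finset.sdiff_subset, Finset.sdiff_disjoint⟩⟩
  invFun D :=
    have hD := isSub_cutSet.admissibleCut_quot_iff.1 D.2
    ⟨F.extendCut C D.1, admissibleCut_extendCut hC hD.1 hD.2, cutLE_extendCut⟩
  left_inv C' := Subtype.ext (extendCut_of_cutLE hC C'.2.1 C'.2.2)
  right_inv D :=
    Subtype.ext (extendCut_sdiff_cutSet hC (isSub_cutSet.admissibleCut_quot_iff.1 D.2).2)

noncomputable def subforestsAboveEquiv (hS : F.IsSub S) :
    {H : Finset ℕ // F.IsSub H ∧ S ⊆ H} ≃ {T : Finset ℕ // (F.quot S).IsSub T} where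
  toFun H := ⟨H.1 \ S, hS.isSub_quot_iff.2
    ⟨by rw [Finset.sdiff_union_of_subset H.2.2]; exact H.2.1, Finset.sdiff_disjoint⟩⟩
  invFun T := ⟨T.1 ∪ S, (hS.isSub_quot_iff.1 T.2).1, Finset.subset_union_right⟩
  left_inv H := Subtype.ext (Finset.sdiff_union_of_subset H.2.2)
  right_inv T := Subtype.ext (Finset.union_sdiff_cancel_right (hS.isSub_quot_iff.1 T.2).2)

end Forest

/-- For a labeled rooted forest `F` with admissible cut `C`, admissible
cuts `C'` of `F` with `C ≤ C'` correspond bijectively to admissible cuts of the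
quotient `R_C(F)`; consequently subforests of `R_C(F)` correspond bijectively to
subforests `H` of `F` with `P_C(F) ⊆ H ⊆ F`. -/
theorem cuts_of_quotient_bijection (F : Forest) (C : Finset ℕ)
    (hC : F.AdmissibleCut C) :
    Nonempty ({C' : Finset ℕ // F.AdmissibleCut C' ∧ F.CutLE C C'} ≃
      {D : Finset ℕ // (F.quot (F.cutSet C)).AdmissibleCut D}) ∧
    Nonempty ({H : Finset ℕ // F.IsSub H ∧ F.cutSet C ⊆ H} ≃
      {T : Finset ℕ // (F.quot (F.cutSet C)).IsSub T}) :=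
  ⟨⟨Forest.cutsAboveEquiv hC⟩, ⟨Forest.subforestsAboveEquiv Forest.isSub_cutSet⟩⟩
end

section
/- Every monomorphism in the category LRF of labeled rooted forests is of the form (C_null, C₁, f) : P_{C₁}(F₁) → F₁ where f is an automorphism of P_{C₁}(F₁); in particular, for a fixed image subforest P_{C₁}(F₁), the monomorphisms with that image form a torsor over Aut(P_{C₁}(F₁)) and number exactly |Aut(P_{C₁}(F₁))|. -/
attribute [local instance] Classical.propDecidable

namespace Forest

/-- A (raw) morphism datum in the category `LRF`: a triple `(C₁, C₂, f)`. -/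
structure Mor where
  cut1 : Finset ℕ
  cut2 : Finset ℕ
  map : ℕ → ℕ

/-- `(C₁, C₂, f)` is a morphism `F → G` in `LRF`: `C₁` is an admissible cut of `F`
(recorded by the severed vertex set), `C₂` one of `G`, and `f` an isomorphism
`R_{C₁}(F) ≅ P_{C₂}(G)`. -/
def IsMor (F G : Forest) (m : Mor) : Prop :=
  F.IsSub m.cut1 ∧ G.IsSub m.cut2 ∧
    IsoMap (F.quot m.cut1) (G.restrict m.cut2) m.map

/-- Composition of morphisms in `LRF` (`m : F → F₂` followed by `n : F₂ → F₃`):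
the cut of `n` is pulled back through `m` to a cut `E₁ ≥ C₁` of `F`, and the new
image is the image of `R_{E₁}(F)` under the composite map. -/
noncomputable def Mor.comp (F : Forest) (m n : Mor) : Mor :=
  ⟨m.cut1 ∪ ((F.quot m.cut1).verts.filter fun v => m.map v ∈ n.cut1),
   ((F.quot (m.cut1 ∪ ((F.quot m.cut1).verts.filter fun v => m.map v ∈ n.cut1))).verts).image
     (n.map ∘ m.map),
   n.map ∘ m.map⟩

/-- The identity morphism `(C_null, C_full, id)` of `F`. -/
def idMor (F : Forest) : Mor := ⟨∅, F.verts, id⟩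

/-- Equality of morphisms out of `F` (the map only matters on `R_{C₁}(F)`). -/
def MorEq (F : Forest) (m n : Mor) : Prop :=
  m.cut1 = n.cut1 ∧ m.cut2 = n.cut2 ∧
    ∀ v ∈ (F.quot m.cut1).verts, m.map v = n.map v

/-- The zero morphisms `F → G`: morphisms with empty image (factoring through `∅`). -/
def IsZeroMor (F G : Forest) (m : Mor) : Prop := IsMor F G m ∧ m.cut2 = ∅

end Forest

namespace Forest

/-- `m` is a monomorphism `F₁ → F₂` in `LRF`: a left-cancellable morphism. -/
def IsMono (F1 F2 : Forest) (m : Mor) : Prop :=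
  IsMor F1 F2 m ∧ ∀ (A : Forest) (u v : Mor), IsMor A F1 u → IsMor A F1 v →
    MorEq A (Mor.comp A u m) (Mor.comp A v m) → MorEq A u v

/-- Normalized isomorphisms `A ≅ B` (acting as the identity off `A`). -/
def NIso (A B : Forest) : Type :=
  {f : ℕ → ℕ // IsoMap A B f ∧ ∀ v, v ∉ A.verts → f v = v}

end Forest

namespace Forest

lemma restrict_verts_of_subset {F : Forest} {S : Finset ℕ} (h : S ⊆ F.verts) :
    (F.restrict S).verts = S :=
  Finset.inter_eq_left.mpr h

lemma quot_self_verts (A : Forest) : (A.quot A.verts).verts = ∅ :=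
  Finset.sdiff_self _

lemma quot_empty_verts (A : Forest) : (A.quot ∅).verts = A.verts :=
  Finset.sdiff_empty

lemma quot_empty_parent (A : Forest) {v : ℕ} (hv : v ∈ A.verts) :
    (A.quot ∅).parent v = A.parent v := by
  show (A.parent v).bind _ = _
  cases h : A.parent v with
  | none => rfl
  | some p => simp [hv, A.parent_mem v hv p h]

lemma isoMap_quot_empty_iff {A B : Forest} {φ : ℕ → ℕ} :
    IsoMap (A.quot ∅) B φ ↔ IsoMap A B φ := by
  unfold IsoMap
  rw [quot_empty_verts]
  refine and_congr_right fun _ => forall₂_congr fun v hv => ?_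
  rw [quot_empty_parent A hv]

lemma isSub_empty (F : Forest) : F.IsSub ∅ :=
  ⟨Finset.empty_subset _, by simp⟩

lemma isSub_verts (F : Forest) : F.IsSub F.verts :=
  ⟨subset_rfl, fun _ _ _ hw _ => hw⟩

lemma isoMap_id (A : Forest) : IsoMap A A id :=
  ⟨Set.bijOn_id _, fun _ _ => Option.map_id'⟩

section IsoMap

variable {A B C : Forest} {φ χ : ℕ → ℕ}

lemma IsoMap.congr (h : IsoMap A B φ) (he : ∀ v ∈ A.verts, φ v = χ v) : IsoMap A B χ := by
  refine ⟨h.1.congr he, fun v hv => ?_⟩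
  rw [← he v hv, ← h.2 v hv]
  cases hp : A.parent v with
  | none => rfl
  | some p => simp [he p (A.parent_mem v hv p hp)]

lemma IsoMap.comp (h₁ : IsoMap A B φ) (h₂ : IsoMap B C χ) : IsoMap A C (χ ∘ φ) := by
  refine ⟨h₂.1.comp h₁.1, fun v hv => ?_⟩
  rw [← Option.map_map, h₁.2 v hv, h₂.2 (φ v) (h₁.1.mapsTo hv), Function.comp_apply]

lemma IsoMap.symm (h : IsoMap A B φ) : IsoMap B A (Function.invFunOn φ A.verts) := by
  have hinv := h.1.invOn_invFunOn
  have hbij := h.1.symm hinv.symm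
  refine ⟨hbij, fun w hw => ?_⟩
  set a := Function.invFunOn φ A.verts w
  have ha : a ∈ A.verts := hbij.mapsTo hw
  have e := h.2 a ha
  rw [hinv.2 hw] at e
  rw [← e]
  cases hp : A.parent a with
  | none => rfl
  | some p => simp [hinv.1 (Finset.mem_coe.mpr (A.parent_mem a ha p hp))]

lemma IsoMap.map_mem (h : IsoMap A B φ) {v : ℕ} (hv : v ∈ A.verts) : φ v ∈ B.verts :=
  h.1.mapsTo hv

end IsoMap

namespace NIso

variable {A B C : Forest}

instance : CoeFun (NIso A B) fun _ => ℕ → ℕ := ⟨Subtype.val⟩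

lemma isoMap (e : NIso A B) : IsoMap A B e := e.2.1

lemma apply_of_not_mem (e : NIso A B) {v : ℕ} (hv : v ∉ A.verts) : e v = v := e.2.2 v hv

lemma ext_of_eqOn {e f : NIso A B} (h : ∀ v ∈ A.verts, e v = f v) : e = f := by
  refine Subtype.ext (funext fun v => ?_)
  by_cases hv : v ∈ A.verts
  · exact h v hv
  · exact (e.apply_of_not_mem hv).trans (f.apply_of_not_mem hv).symm

end NIso

noncomputable def IsoMap.toNIso {A B : Forest} {φ : ℕ → ℕ} (h : IsoMap A B φ) : NIso A B :=
  ⟨fun v => if v ∈ A.verts then φ v else v,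
    h.congr fun _ hv => (if_pos hv).symm, fun _ hv => if_neg hv⟩

lemma IsoMap.toNIso_apply {A B : Forest} {φ : ℕ → ℕ} (h : IsoMap A B φ) {v : ℕ}
    (hv : v ∈ A.verts) : h.toNIso v = φ v :=
  if_pos hv

namespace NIso

variable {A B C : Forest}

noncomputable def trans (e : NIso A B) (f : NIso B C) : NIso A C := (e.isoMap.comp f.isoMap).toNIso

noncomputable def symm (e : NIso A B) : NIso B A := e.isoMap.symm.toNIso

lemma trans_apply (e : NIso A B) (f : NIso B C) {v : ℕ} (hv : v ∈ A.verts) :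
    e.trans f v = f (e v) :=
  IsoMap.toNIso_apply _ hv

lemma symm_apply_apply (e : NIso A B) {v : ℕ} (hv : v ∈ A.verts) : e.symm (e v) = v := by
  rw [symm, IsoMap.toNIso_apply _ (e.isoMap.map_mem hv)]
  exact e.isoMap.1.invOn_invFunOn.1 (Finset.mem_coe.mpr hv)

lemma apply_symm_apply (e : NIso A B) {w : ℕ} (hw : w ∈ B.verts) : e (e.symm w) = w := by
  rw [symm, IsoMap.toNIso_apply _ hw]
  exact e.isoMap.1.invOn_invFunOn.2 (Finset.mem_coe.mpr hw)

/-- For `C = B` this is the `Aut(B)`-torsor structure on the isomorphisms `A ≅ B`. -/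
noncomputable def congrLeft (e : NIso A B) : NIso A C ≃ NIso B C where
  toFun g := e.symm.trans g
  invFun g := e.trans g
  left_inv g := ext_of_eqOn fun v hv => by
    rw [trans_apply _ _ hv, trans_apply _ _ (e.isoMap.map_mem hv), symm_apply_apply _ hv]
  right_inv g := ext_of_eqOn fun w hw => by
    rw [trans_apply _ _ hw, trans_apply _ _ (e.symm.isoMap.map_mem hw), apply_symm_apply _ hw]

end NIso

lemma IsMor.cut2_eq_image {A F : Forest} {u : Mor} (hu : IsMor A F u) :
    (u.cut2 : Set ℕ) = u.map '' (A.quot u.cut1).verts := by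
  rw [hu.2.2.1.image_eq, restrict_verts_of_subset hu.2.1.1]

lemma IsMor.map_mem {A F : Forest} {u : Mor} (hu : IsMor A F u) {v : ℕ}
    (hv : v ∈ (A.quot u.cut1).verts) : u.map v ∈ F.verts :=
  (Finset.mem_inter.mp (hu.2.2.map_mem hv)).2

lemma IsMor.isoMap_of_cut_eq {A F : Forest} {u : Mor} {S : Finset ℕ} (hu : IsMor A F u)
    (h₁ : u.cut1 = ∅) (h₂ : u.cut2 = S) : IsoMap A (F.restrict S) u.map := by
  have h := hu.2.2
  rw [h₁, h₂] at h
  exact isoMap_quot_empty_iff.mp h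

noncomputable def cutEmptyMorEquivNIso (A : Forest) {F : Forest} {S : Finset ℕ} (hS : F.IsSub S) :
    {u : Mor // IsMor A F u ∧ u.cut1 = ∅ ∧ u.cut2 = S ∧ ∀ v, v ∉ A.verts → u.map v = v} ≃
      NIso A (F.restrict S) where
  toFun u := ⟨u.1.map, u.2.1.isoMap_of_cut_eq u.2.2.1 u.2.2.2.1, u.2.2.2.2⟩
  invFun g := ⟨⟨∅, S, g⟩, ⟨A.isSub_empty, hS, isoMap_quot_empty_iff.mpr g.isoMap⟩,
    rfl, rfl, g.2.2⟩
  left_inv := by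
    rintro ⟨⟨c₁, c₂, f⟩, _, h₁, h₂, _⟩
    dsimp only at h₁ h₂
    subst h₁ h₂
    rfl
  right_inv _ := rfl

lemma Mor.comp_cut1_of_cut1_eq_empty (F : Forest) (m : Mor) {n : Mor} (h : n.cut1 = ∅) :
    (Mor.comp F m n).cut1 = m.cut1 := by
  simp [Mor.comp, h]

lemma morEq_comp_of_comp_cut1_eq_verts {A : Forest} {u v m : Mor}
    (hu : (Mor.comp A u m).cut1 = A.verts) (hv : (Mor.comp A v m).cut1 = A.verts) :
    MorEq A (Mor.comp A u m) (Mor.comp A v m) := by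
  have hcut2 : ∀ w : Mor, (Mor.comp A w m).cut1 = A.verts → (Mor.comp A w m).cut2 = ∅ := by
    intro w hw
    show Finset.image _ (A.quot (Mor.comp A w m).cut1).verts = ∅
    rw [hw, quot_self_verts, Finset.image_empty]
  refine ⟨hu.trans hv.symm, (hcut2 u hu).trans (hcut2 v hv).symm, fun w hw => ?_⟩
  rw [hu, quot_self_verts] at hw
  exact absurd hw (Finset.notMem_empty w)

lemma isMono_of_cut1_eq_empty {F₁ F₂ : Forest} {m : Mor} (hm : IsMor F₁ F₂ m)
    (h : m.cut1 = ∅) : IsMono F₁ F₂ m := by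
  refine ⟨hm, fun A u v hu hv ⟨hcut1, _, hmap⟩ => ?_⟩
  rw [Mor.comp_cut1_of_cut1_eq_empty A u h, Mor.comp_cut1_of_cut1_eq_empty A v h] at hcut1
  have hinj : Set.InjOn m.map F₁.verts := by
    simpa only [h, quot_empty_verts] using hm.2.2.1.injOn
  have hagree : ∀ w ∈ (A.quot u.cut1).verts, u.map w = v.map w := fun w hw =>
    hinj (hu.map_mem hw) (hv.map_mem (hcut1 ▸ hw))
      (hmap w (by rwa [Mor.comp_cut1_of_cut1_eq_empty A u h]))
  refine ⟨hcut1, Finset.coe_injective ?_, hagree⟩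
  rw [hu.cut2_eq_image, hv.cut2_eq_image, ← hcut1]
  exact Set.image_congr hagree

lemma isMor_inclusion {F : Forest} {S : Finset ℕ} (hS : F.IsSub S) :
    IsMor (F.restrict S) F ⟨∅, S, id⟩ :=
  ⟨isSub_empty _, hS, isoMap_quot_empty_iff.mpr (isoMap_id _)⟩

lemma isMor_zero (A F : Forest) : IsMor A F ⟨A.verts, ∅, id⟩ := by
  refine ⟨A.isSub_verts, F.isSub_empty, ⟨?_, fun w hw => ?_⟩⟩
  · simp only [quot_self_verts, restrict, Finset.empty_inter, Finset.coe_empty]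
    exact Set.bijOn_empty _
  · simp [quot_self_verts] at hw

/-- The inclusion `P_C(F₁) → F₁` and the zero morphism `P_C(F₁) → F₁` both become zero
after composing with `m`, so left-cancellability forces `P_C(F₁)` to be empty. -/
lemma cut1_eq_empty_of_isMono {F₁ F₂ : Forest} {m : Mor} (hm : IsMono F₁ F₂ m) :
    m.cut1 = ∅ := by
  obtain ⟨⟨hsub, -⟩, hcancel⟩ := hm
  set A := F₁.restrict m.cut1
  have hA : A.verts = m.cut1 := restrict_verts_of_subset hsub.1
  have hincl_comp : (Mor.comp A ⟨∅, m.cut1, id⟩ m).cut1 = A.verts := by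
    simp [Mor.comp, quot_empty_verts, hA]
  have hzero_comp : (Mor.comp A ⟨A.verts, ∅, id⟩ m).cut1 = A.verts := by
    simp [Mor.comp, quot_self_verts]
  rw [← hA]
  exact ((hcancel A _ _ (isMor_inclusion hsub) (isMor_zero A F₁)
    (morEq_comp_of_comp_cut1_eq_verts hincl_comp hzero_comp)).1).symm

end Forest
open Forest in
/-- Every monomorphism in `LRF` is of the form
`(C_null, C₁, f) : P_{C₁}(F₁) → F₁` with `f` an automorphism of `P_{C₁}(F₁)`
(i.e. a morphism is mono iff its first cut is empty); and for a fixed image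
subforest `P_{C₁}(F₁)`, the monomorphisms with that image form a torsor over
`Aut(P_{C₁}(F₁))`, so there are exactly `|Aut(P_{C₁}(F₁))|` of them. -/
theorem LRF_monomorphisms :
    (∀ (F1 F2 : Forest) (m : Mor), IsMor F1 F2 m →
      (IsMono F1 F2 m ↔ m.cut1 = ∅)) ∧
    (∀ (A F : Forest) (S : Finset ℕ), F.IsSub S → Iso A (F.restrict S) →
      Nonempty
        ({u : Mor // IsMor A F u ∧ u.cut1 = ∅ ∧ u.cut2 = S ∧
            ∀ v, v ∉ A.verts → u.map v = v} ≃
          NIso (F.restrict S) (F.restrict S)) ∧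
      Nat.card {u : Mor // IsMor A F u ∧ u.cut1 = ∅ ∧ u.cut2 = S ∧
            ∀ v, v ∉ A.verts → u.map v = v} =
        Nat.card (NIso (F.restrict S) (F.restrict S))) := by
  refine ⟨fun F1 F2 m hm => ⟨cut1_eq_empty_of_isMono, isMono_of_cut1_eq_empty hm⟩, ?_⟩
  rintro A F S hS ⟨φ, hφ⟩
  let E := (cutEmptyMorEquivNIso A hS).trans hφ.toNIso.congrLeft
  exact ⟨⟨E⟩, Nat.card_congr E⟩
end
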